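/- Let E be a topological graph and let μ ∈ E^* be a finite path. Then s(μ) ∈ E_sg^0 (i.e., μ ∈ ∂E) if and only if μ is a Yeend boundary path (μ ∈ ∂_Y E). -/

import Mathlib

open Set Topology Filter

namespace TopGraphPaper

variable {V E : Type*}

/-- The set `E^0_fin` of vertices with a neighborhood whose closure has compact `r`-preimage. -/
def Vfin [TopologicalSpace V] [TopologicalSpace E] (r : E → V) : Set V :=
  {v | ∃ N : Set V, IsOpen N ∧ v ∈ N ∧ IsCompact (r ⁻¹' closure N)}

/-- The set `E^0_sce` of sources. -/
def Vsce [TopologicalSpace V] (r : E → V) : Set V := (closure (Set.range r))ᶜ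

/-- The set `E^0_rg` of regular vertices. -/
def Vrg [TopologicalSpace V] [TopologicalSpace E] (r : E → V) : Set V :=
  Vfin r \ closure (Vsce r)

/-- The set `E^0_sg` of singular vertices. -/
def Vsg [TopologicalSpace V] [TopologicalSpace E] (r : E → V) : Set V := (Vrg r)ᶜ

/-- Compatibility condition defining a finite path: the source of each edge is the
range of the next one. -/
def IsPath (r s : E → V) {n : ℕ} (μ : Fin n → E) : Prop :=
  ∀ (i : ℕ) (h : i + 1 < n), s (μ ⟨i, by omega⟩) = r (μ ⟨i + 1, h⟩)

/-- The space `E^n` of paths of length `n` (`n ≥ 1`), topologized as a subspace of `(E^1)^n`. -/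
abbrev PathSpace (r s : E → V) (n : ℕ) := {μ : Fin n → E // IsPath r s μ}

/-- The finite-path space `E^* = ⨿ₙ E^n`: a path of length `0` is a vertex, and a path of
positive length `n+1` lives in `PathSpace r s (n+1)`.  It carries the disjoint-union
topology. -/
abbrev FinPaths (r s : E → V) := V ⊕ (Σ n : ℕ, PathSpace r s (n + 1))

/-- The infinite-path space `E^∞`. -/
abbrev InfPaths (r s : E → V) := {μ : ℕ → E // ∀ i, s (μ i) = r (μ (i + 1))}

/-- The range of a finite path. -/
def finRng (r s : E → V) : FinPaths r s → V :=
  Sum.elim id fun x => r (x.2.1 0)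

/-- The source of a finite path. -/
def finSrc (r s : E → V) : FinPaths r s → V :=
  Sum.elim id fun x => s (x.2.1 (Fin.last x.1))

/-- The length of a finite path. -/
def finLen (r s : E → V) : FinPaths r s → ℕ :=
  Sum.elim (fun _ => 0) fun x => x.1 + 1

/-- `IsPrefixOf r s α λ` : the finite path `α` is an initial segment of the finite path `λ`
(equivalently, `λ = α β` for some finite path `β`). -/
def IsPrefixOf (r s : E → V) : FinPaths r s → FinPaths r s → Prop
  | Sum.inl v, q => v = finRng r s q
  | Sum.inr _, Sum.inl _ => False
  | Sum.inr a, Sum.inr b =>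
      ∃ h : a.1 ≤ b.1, ∀ j : Fin (a.1 + 1), a.2.1 j = b.2.1 (Fin.castLE (by omega) j)

/-- `K ⊆ E^*` is exhaustive for `W ⊆ E^0`. -/
def Exhaustive (r s : E → V) (K : Set (FinPaths r s)) (W : Set V) : Prop :=
  K ⊆ finRng r s ⁻¹' W ∧
    ∀ q : FinPaths r s, finRng r s q ∈ W →
      ∃ a ∈ K, IsPrefixOf r s a q ∨ IsPrefixOf r s q a

/-- The segment `μ_{m+1} ⋯ μ_{m+1+j}` (0-indexed: edges `m, …, m+j`) of an infinite path. -/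
def infSeg (r s : E → V) (μ : InfPaths r s) (m j : ℕ) : FinPaths r s :=
  Sum.inr ⟨j, ⟨fun i => μ.1 (m + i.1), fun i _ => μ.2 (m + i)⟩⟩

/-- The segment with edges `m, …, m+j` (0-indexed) of a finite path of length `n+1`. -/
def finSeg (r s : E → V) {n : ℕ} (a : PathSpace r s (n + 1)) (m j : ℕ)
    (hmj : m + j ≤ n) : FinPaths r s :=
  Sum.inr ⟨j, ⟨fun i => a.1 ⟨m + i.1, by have := i.isLt; omega⟩,
    fun i h => a.2 (m + i) (by omega)⟩⟩

/-- Yeend's boundary-path condition for an infinite path. -/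
def YeendInf [TopologicalSpace V] [TopologicalSpace E] (r s : E → V)
    (μ : InfPaths r s) : Prop :=
  ∀ (m : ℕ) (K : Set (FinPaths r s)), IsCompact K →
    finRng r s '' K ∈ nhds (r (μ.1 m)) →
    Exhaustive r s K (finRng r s '' K) →
    (Sum.inl (r (μ.1 m)) ∈ K ∨ ∃ j : ℕ, infSeg r s μ m j ∈ K)

/-- Yeend's boundary-path condition for a finite path. -/
def YeendFin [TopologicalSpace V] [TopologicalSpace E] (r s : E → V)
    (μ : FinPaths r s) : Prop :=
  (∀ x : Σ n : ℕ, PathSpace r s (n + 1), μ = Sum.inr x →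
    ∀ (m : ℕ) (hm : m ≤ x.1) (K : Set (FinPaths r s)), IsCompact K →
      finRng r s '' K ∈ nhds (r (x.2.1 ⟨m, by omega⟩)) →
      Exhaustive r s K (finRng r s '' K) →
      (Sum.inl (r (x.2.1 ⟨m, by omega⟩)) ∈ K ∨
        ∃ (j : ℕ) (hj : m + j ≤ x.1), finSeg r s x.2 m j hj ∈ K)) ∧
  (∀ K : Set (FinPaths r s), IsCompact K →
    finRng r s '' K ∈ nhds (finSrc r s μ) →
    Exhaustive r s K (finRng r s '' K) →
    Sum.inl (finSrc r s μ) ∈ K)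

/-!
If `s(μ)` is singular, fix a compact exhaustive `K` and a path `q` ending at `v = s(q)` none of
whose prefixes lies in `K`. Since `s` is a local homeomorphism, the paths of length `|q|` ending
near `v` form a continuous family `Q_w` through `q`, and as `K` is closed no prefix of `Q_w` lies
in `K` for `w` near `v`. Exhaustiveness then forces `K` to continue every `Q_w` and every `Q_w e`:
each `w` near `v` receives an edge, and each edge `e` with `r(e)` near `v` occurs at position `|q|`
of a path in `K`. So a neighbourhood of `v` lies in `r(E^1)` with compact `r`-preimage, i.e. `v`
is regular. Conversely, at a regular vertex `v` the single edges with range in the closure of a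
small neighbourhood of `v` form a compact exhaustive set that does not contain `v`.
-/

variable {r s : E → V}

lemma IsPath.cons {n : ℕ} {p : Fin (n + 1) → E} (hp : IsPath r s p) {e : E}
    (he : s e = r (p 0)) : IsPath r s (Fin.cons e p : Fin (n + 2) → E) := by
  rintro (_ | i) h
  · exact he
  · exact hp i (by omega)

lemma IsPath.snoc {n : ℕ} {p : Fin (n + 1) → E} (hp : IsPath r s p) {e : E}
    (he : s (p (Fin.last n)) = r e) : IsPath r s (Fin.snoc p e : Fin (n + 2) → E) := by
  intro i h
  rcases Nat.lt_or_ge (i + 1) (n + 1) with hi | hi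
  · simpa [Fin.snoc, hi, show i < n + 1 by omega] using hp i hi
  · obtain rfl : i = n := by omega
    rw [show (⟨i, _⟩ : Fin (i + 2)) = (Fin.last i).castSucc from rfl,
      show (⟨i + 1, h⟩ : Fin (i + 2)) = Fin.last (i + 1) from rfl, Fin.snoc_castSucc,
      Fin.snoc_last]
    exact he

lemma IsPath.tail {n : ℕ} {p : Fin (n + 2) → E} (hp : IsPath r s p) :
    IsPath r s (Fin.tail p) :=
  fun i h => hp (i + 1) (by omega)

variable (r s) in
def edgePath (e : E) : FinPaths r s :=
  Sum.inr ⟨0, ⟨fun _ => e, fun _ h => by omega⟩⟩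

variable (r s) in
def finSnoc : (p : FinPaths r s) → (e : E) → finSrc r s p = r e → FinPaths r s
  | Sum.inl _, e, _ => edgePath r s e
  | Sum.inr ⟨n, p⟩, e, h => Sum.inr ⟨n + 1, ⟨Fin.snoc p.1 e, p.2.snoc h⟩⟩

variable (r s) in
/-- Edges are 0-indexed; `Sum.inr ()` when the path has no edge at position `k`. -/
def edgeAt (k : ℕ) : FinPaths r s → E ⊕ Unit :=
  Sum.elim (fun _ => Sum.inr ()) fun x =>
    if h : k ≤ x.1 then Sum.inl (x.2.1 ⟨k, by omega⟩) else Sum.inr ()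

variable (r s) in
/-- The initial segment with `k` edges; the whole path if it is shorter. -/
def finTrunc (k : ℕ) : FinPaths r s → FinPaths r s
  | Sum.inl v => Sum.inl v
  | Sum.inr x =>
    match k with
    | 0 => Sum.inl (r (x.2.1 0))
    | k + 1 =>
      if h : k ≤ x.1 then
        Sum.inr ⟨k, ⟨fun i => x.2.1 (Fin.castLE (by omega) i),
          fun i hi => x.2.2 i (by omega)⟩⟩
      else Sum.inr x

lemma inr_mk_ext {n : ℕ} {a b : PathSpace r s (n + 1)} (h : ∀ j, a.1 j = b.1 j) :
    (Sum.inr ⟨n, a⟩ : FinPaths r s) = Sum.inr ⟨n, b⟩ := by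
  rw [Subtype.ext (funext h)]

lemma isPrefixOf_refl (p : FinPaths r s) : IsPrefixOf r s p p := by
  rcases p with v | x
  · rfl
  · exact ⟨le_rfl, fun j => rfl⟩

lemma eq_of_isPrefixOf_inl {a : FinPaths r s} {v : V} (h : IsPrefixOf r s a (Sum.inl v)) :
    a = Sum.inl v := by
  rcases a with u | x
  · exact congrArg Sum.inl h
  · exact h.elim

lemma isPrefixOf_finSeg {n : ℕ} {x : PathSpace r s (n + 1)} {m j : ℕ} {hmj : m + j ≤ n}
    {a : FinPaths r s} (h : IsPrefixOf r s a (finSeg r s x m j hmj)) :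
    a = Sum.inl (r (x.1 ⟨m, by omega⟩)) ∨
      ∃ (i : ℕ) (hi : m + i ≤ n), a = finSeg r s x m i hi := by
  rcases a with u | ⟨i, a⟩
  · exact Or.inl (congrArg Sum.inl h)
  · obtain ⟨hij, heq⟩ := h
    exact Or.inr ⟨i, by simp only at hij; omega, inr_mk_ext heq⟩

lemma finRng_finSnoc (p : FinPaths r s) (e : E) (h : finSrc r s p = r e) :
    finRng r s (finSnoc r s p e h) = finRng r s p := by
  rcases p with v | ⟨n, p⟩
  · exact h.symm
  · simp [finSnoc, finRng, Fin.snoc]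

lemma edgeAt_eq_of_finSnoc_isPrefixOf {p a : FinPaths r s} {e : E} {h : finSrc r s p = r e}
    (hpa : IsPrefixOf r s (finSnoc r s p e h) a) : edgeAt r s (finLen r s p) a = Sum.inl e := by
  rcases p with v | ⟨n, p⟩ <;> rcases a with u | ⟨m, a⟩
  · exact hpa.elim
  · obtain ⟨hle, heq⟩ := hpa
    simpa [edgeAt, finLen] using (heq 0).symm
  · exact hpa.elim
  · obtain ⟨hle, heq⟩ := hpa
    have hlast := heq (Fin.last _)
    dsimp only [finSnoc] at hlast
    rw [Fin.snoc_last] at hlast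
    change edgeAt r s (n + 1) (Sum.inr ⟨m, a⟩) = _
    simp only [edgeAt, Sum.elim_inr, dif_pos (show n + 1 ≤ m from hle)]
    exact congrArg Sum.inl hlast.symm

lemma isPrefixOf_finSnoc {p a : FinPaths r s} {e : E} {h : finSrc r s p = r e}
    (hap : IsPrefixOf r s a (finSnoc r s p e h)) :
    IsPrefixOf r s a p ∨ a = finSnoc r s p e h := by
  rcases p with v | ⟨n, p⟩ <;> rcases a with u | ⟨m, a⟩
  · exact Or.inl (hap.trans h.symm)
  · obtain ⟨hle, heq⟩ := hap
    obtain rfl : m = 0 := by simpa [finSnoc] using hle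
    exact Or.inr (inr_mk_ext heq)
  · simpa [IsPrefixOf, finRng, finSnoc, Fin.snoc] using hap
  · obtain ⟨hle, heq⟩ := hap
    dsimp only [finSnoc] at hle heq
    rcases Nat.lt_or_ge m (n + 1) with hm | hm
    · refine Or.inl ⟨show m ≤ n by omega, fun (j : Fin (m + 1)) => ?_⟩
      rw [heq j]
      exact Fin.snoc_castSucc (α := fun _ => E) (p := p.1) (x := e) (i := Fin.castLE (by omega) j)
    · obtain rfl : m = n + 1 := by omega
      exact Or.inr (inr_mk_ext heq)

lemma exists_finSnoc_isPrefixOf {p a : FinPaths r s} (hpa : IsPrefixOf r s p a)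
    (hap : ¬ IsPrefixOf r s a p) : ∃ e h, IsPrefixOf r s (finSnoc r s p e h) a := by
  rcases p with v | ⟨n, p⟩ <;> rcases a with u | ⟨m, a⟩
  · exact (hap hpa.symm).elim
  · refine ⟨a.1 0, hpa, Nat.zero_le _, fun j => ?_⟩
    rw [Subsingleton.elim (α := Fin 1) j 0]
    rfl
  · exact hpa.elim
  · obtain ⟨hle, heq⟩ := hpa
    dsimp only at hle heq
    have hnm : n < m := by
      refine lt_of_le_of_ne hle fun hnm => hap ⟨hnm.ge, fun j => ?_⟩
      subst hnm
      exact (heq j).symm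
    refine ⟨a.1 ⟨n + 1, by omega⟩, ?_, hnm, fun j => ?_⟩
    · rw [finSrc, Sum.elim_inr, heq (Fin.last n)]
      exact a.2 n (by omega)
    · induction j using Fin.lastCases with
      | last => simp only [Fin.snoc_last]; rfl
      | cast j => simpa [finSnoc] using heq j

lemma finTrunc_isPrefixOf (k : ℕ) (p : FinPaths r s) : IsPrefixOf r s (finTrunc r s k p) p := by
  rcases p with v | x
  · rfl
  rcases k with _ | k
  · rfl
  by_cases hk : k ≤ x.1
  · simp only [finTrunc, dif_pos hk]
    exact ⟨hk, fun j => rfl⟩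
  · simp only [finTrunc, dif_neg hk]
    exact isPrefixOf_refl _

lemma IsPrefixOf.finLen_le {a p : FinPaths r s} (h : IsPrefixOf r s a p) :
    finLen r s a ≤ finLen r s p := by
  rcases a with u | ⟨m, a⟩ <;> rcases p with v | ⟨n, p⟩
  · exact le_rfl
  · exact Nat.zero_le _
  · exact h.elim
  · simpa [finLen] using h.1

lemma IsPrefixOf.finTrunc_eq {a p : FinPaths r s} (h : IsPrefixOf r s a p) :
    finTrunc r s (finLen r s a) p = a := by
  rcases a with u | ⟨m, a⟩ <;> rcases p with v | ⟨n, p⟩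
  · exact congrArg Sum.inl h.symm
  · exact congrArg Sum.inl h.symm
  · exact h.elim
  · obtain ⟨hle, heq⟩ := h
    simp only [finLen, Sum.elim_inr, finTrunc, dif_pos hle]
    exact inr_mk_ext fun j => (heq j).symm

section Exhaustive

variable {K : Set (FinPaths r s)} {W : Set V}

lemma Exhaustive.finSrc_mem_range (hex : Exhaustive r s K W) {p : FinPaths r s}
    (hp : finRng r s p ∈ W)
    (hK : ∀ a ∈ K, ¬ IsPrefixOf r s a p) : finSrc r s p ∈ range r := by
  obtain ⟨a, haK, hap | hpa⟩ := hex.2 p hp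
  · exact (hK a haK hap).elim
  · obtain ⟨e, he, -⟩ := exists_finSnoc_isPrefixOf hpa (hK a haK)
    exact ⟨e, he.symm⟩

lemma Exhaustive.inl_mem_image_edgeAt (hex : Exhaustive r s K W) {p : FinPaths r s}
    (hp : finRng r s p ∈ W)
    (hK : ∀ a ∈ K, ¬ IsPrefixOf r s a p) {e : E} (he : finSrc r s p = r e) :
    Sum.inl e ∈ edgeAt r s (finLen r s p) '' K := by
  obtain ⟨a, haK, hap | hpa⟩ := hex.2 (finSnoc r s p e he) (by rwa [finRng_finSnoc])
  · rcases isPrefixOf_finSnoc hap with hap | rfl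
    · exact (hK a haK hap).elim
    · exact ⟨_, haK, edgeAt_eq_of_finSnoc_isPrefixOf (isPrefixOf_refl _)⟩
  · exact ⟨a, haK, edgeAt_eq_of_finSnoc_isPrefixOf hpa⟩

end Exhaustive

section Topology

variable [TopologicalSpace E]

lemma continuous_pathSpace_apply {n : ℕ} (i : Fin n) :
    Continuous fun p : PathSpace r s n => p.1 i :=
  (continuous_apply i).comp continuous_subtype_val

variable [TopologicalSpace V]

lemma continuous_finRng (hr : Continuous r) : Continuous (finRng r s) :=
  continuous_sumElim.2 ⟨continuous_id, continuous_sigma fun _ =>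
    hr.comp (continuous_pathSpace_apply 0)⟩

lemma continuous_edgePath : Continuous (edgePath r s) :=
  continuous_inr.comp ((continuous_sigmaMk (σ := fun n => PathSpace r s (n + 1))).comp
    ((continuous_pi fun _ => continuous_id).subtype_mk _))

lemma continuous_edgeAt (k : ℕ) : Continuous (edgeAt r s k) := by
  refine continuous_sumElim.2 ⟨continuous_const, continuous_sigma fun n => ?_⟩
  by_cases h : k ≤ n
  · simp only [dif_pos h]
    exact continuous_inl.comp (continuous_pathSpace_apply (n := n + 1) ⟨k, by omega⟩)
  · simp only [dif_neg h]
    exact continuous_const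

lemma isCompact_edgesAt {K : Set (FinPaths r s)} (hK : IsCompact K) (k : ℕ) :
    IsCompact {e : E | Sum.inl e ∈ edgeAt r s k '' K} :=
  IsClosedEmbedding.inl.isCompact_preimage (hK.image (continuous_edgeAt k))

lemma continuous_finTrunc (hr : Continuous r) (k : ℕ) : Continuous (finTrunc r s k) := by
  refine continuous_sum_dom.2 ⟨continuous_inl, continuous_sigma fun n => ?_⟩
  rcases k with _ | k
  · exact continuous_inl.comp (hr.comp (continuous_pathSpace_apply 0))
  by_cases h : k ≤ n
  · simp only [Function.comp_def, finTrunc, dif_pos h]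
    refine continuous_inr.comp (continuous_sigmaMk.comp (Continuous.subtype_mk ?_ _))
    exact continuous_pi fun i => continuous_pathSpace_apply (n := n + 1) (Fin.castLE (by omega) i)
  · simp only [Function.comp_def, finTrunc, dif_neg h]
    exact continuous_inr.comp continuous_sigmaMk

end Topology

section Singular

variable [TopologicalSpace V] [TopologicalSpace E]

variable (r s) in
def HasLocalSection {L : ℕ} (q : PathSpace r s (L + 1)) : Prop :=
  ∃ N : Set V, IsOpen N ∧ s (q.1 (Fin.last L)) ∈ N ∧
    ∃ Q : V → PathSpace r s (L + 1), ContinuousOn Q N ∧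
      (∀ w ∈ N, s ((Q w).1 (Fin.last L)) = w) ∧ Q (s (q.1 (Fin.last L))) = q

lemma hasLocalSection_zero (hs : IsLocalHomeomorph s) (q : PathSpace r s (0 + 1)) :
    HasLocalSection r s q := by
  set σ := hs.localInverseAt (q.1 0)
  refine ⟨σ.source, σ.open_source, hs.apply_self_mem_localInverseAt_source,
    fun w => ⟨fun _ => σ w, fun _ h => by omega⟩, ?_,
    fun w hw => hs.apply_localInverseAt_of_mem hw, ?_⟩
  · exact IsInducing.subtypeVal.continuousOn_iff.2
      (continuousOn_pi.2 fun _ => σ.continuousOn)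
  · refine Subtype.ext (funext fun i => ?_)
    rw [Subsingleton.elim (α := Fin 1) i 0]
    exact hs.localInverseAt_apply_self

lemma HasLocalSection.cons (hr : Continuous r) (hs : IsLocalHomeomorph s) {L : ℕ}
    {q : PathSpace r s (L + 2)} (htail : HasLocalSection r s ⟨Fin.tail q.1, q.2.tail⟩) :
    HasLocalSection r s q := by
  obtain ⟨N, hN, hqN, Q, hQ, hsQ, hQq⟩ := htail
  have hlast : Fin.tail q.1 (Fin.last L) = q.1 (Fin.last (L + 1)) := rfl
  have h01 : r (Fin.tail q.1 0) = s (q.1 0) := (q.2 0 (by omega)).symm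
  dsimp only at hqN hQq
  rw [hlast] at hqN hQq
  set σ := hs.localInverseAt (q.1 0)
  have hrQ : ContinuousOn (fun w => r ((Q w).1 0)) N :=
    hr.comp_continuousOn ((continuous_pathSpace_apply 0).comp_continuousOn hQ)
  set N' := N ∩ (fun w => r ((Q w).1 0)) ⁻¹' σ.source
  have hqN' : s (q.1 (Fin.last (L + 1))) ∈ N' := by
    refine ⟨hqN, ?_⟩
    show r ((Q _).1 0) ∈ σ.source
    rw [hQq, h01]
    exact hs.apply_self_mem_localInverseAt_source
  classical
  let Q' : V → PathSpace r s (L + 2) := fun w =>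
    if hw : w ∈ N' then
      ⟨Fin.cons (σ (r ((Q w).1 0))) (Q w).1,
        (Q w).2.cons (hs.apply_localInverseAt_of_mem hw.2)⟩
    else q
  refine ⟨N', hrQ.isOpen_inter_preimage hN σ.open_source, hqN', Q', ?_, ?_, ?_⟩
  · have hcons : ContinuousOn
        (fun w => (Fin.cons (σ (r ((Q w).1 0))) (Q w).1 : Fin (L + 2) → E)) N' :=
      ContinuousOn.finCons (X := fun _ => E)
        (σ.continuousOn.comp (hrQ.mono inter_subset_left) fun w hw => hw.2)
        ((IsInducing.subtypeVal.continuousOn_iff.1 hQ).mono inter_subset_left)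
    exact IsInducing.subtypeVal.continuousOn_iff.2
      (hcons.congr fun w hw => congrArg Subtype.val (dif_pos hw))
  · intro w hw
    simpa [Q', hw] using hsQ w hw.1
  · simp only [Q', dif_pos hqN', hQq]
    refine Subtype.ext ?_
    dsimp only
    rw [h01, hs.localInverseAt_apply_self]
    exact Fin.cons_self_tail q.1

lemma hasLocalSection (hr : Continuous r) (hs : IsLocalHomeomorph s) :
    ∀ {L : ℕ} (q : PathSpace r s (L + 1)), HasLocalSection r s q
  | 0, q => hasLocalSection_zero hs q
  | _ + 1, _ => (hasLocalSection hr hs _).cons hr hs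

lemma exists_localSection_finSrc (hr : Continuous r) (hs : IsLocalHomeomorph s)
    (q : FinPaths r s) :
    ∃ N : Set V, IsOpen N ∧ finSrc r s q ∈ N ∧
      ∃ Q : V → FinPaths r s, ContinuousOn Q N ∧
      (∀ w ∈ N, finSrc r s (Q w) = w ∧ finLen r s (Q w) = finLen r s q) ∧
      Q (finSrc r s q) = q := by
  rcases q with v | ⟨L, q⟩
  · exact ⟨univ, isOpen_univ, trivial, Sum.inl, continuous_inl.continuousOn,
      fun w _ => ⟨rfl, rfl⟩, rfl⟩
  · obtain ⟨N, hN, hqN, Q, hQ, hsQ, hQq⟩ := hasLocalSection hr hs q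
    refine ⟨N, hN, hqN, fun w => Sum.inr ⟨L, Q w⟩,
      (continuous_inr.comp continuous_sigmaMk).comp_continuousOn hQ,
      fun w hw => ⟨hsQ w hw, rfl⟩, ?_⟩
    show (Sum.inr ⟨L, Q (s (q.1 (Fin.last L)))⟩ : FinPaths r s) = _
    rw [hQq]

lemma mem_Vrg_of_subset_range [T2Space V] [LocallyCompactSpace V] (hr : Continuous r)
    {N : Set V} {C : Set E} (hN : IsOpen N) (hNr : N ⊆ range r) (hC : IsCompact C)
    (hNC : r ⁻¹' N ⊆ C) {v : V} (hv : v ∈ N) : v ∈ Vrg r := by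
  refine ⟨?_, fun hvsce => ?_⟩
  · obtain ⟨M, hM, hvM, hMN⟩ := exists_compact_subset hN hv
    refine ⟨interior M, isOpen_interior, hvM, hC.of_isClosed_subset
      (isClosed_closure.preimage hr) fun e he => hNC (hMN ?_)⟩
    exact closure_minimal interior_subset hM.isClosed he
  · obtain ⟨w, hwN, hwsce⟩ := mem_closure_iff.1 hvsce N hN hv
    exact hwsce (subset_closure (hNr hwN))

theorem exists_isPrefixOf_mem_of_finSrc_mem_Vsg [T2Space V] [LocallyCompactSpace V] [T2Space E]
    (hr : Continuous r) (hs : IsLocalHomeomorph s) {q : FinPaths r s} (hq : finSrc r s q ∈ Vsg r)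
    {K : Set (FinPaths r s)} (hK : IsCompact K) {W : Set V} (hW : W ∈ 𝓝 (finRng r s q))
    (hex : Exhaustive r s K W) : ∃ a ∈ K, IsPrefixOf r s a q := by
  by_contra! hnone
  refine hq ?_
  obtain ⟨N, hN, hqN, Q, hQ, hQsrc, hQq⟩ := exists_localSection_finSrc hr hs q
  set S : Set (FinPaths r s) := finRng r s ⁻¹' interior W ∩
    ⋂ k ∈ Iic (finLen r s q), finTrunc r s k ⁻¹' Kᶜ
  have hS : IsOpen S :=
    (isOpen_interior.preimage (continuous_finRng hr)).inter <| (finite_Iic _).isOpen_biInter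
      fun k _ => hK.isClosed.isOpen_compl.preimage (continuous_finTrunc hr k)
  have hfree : ∀ w ∈ N ∩ Q ⁻¹' S,
      finRng r s (Q w) ∈ W ∧ ∀ a ∈ K, ¬ IsPrefixOf r s a (Q w) := by
    rintro w ⟨hwN, hwrng, hwtrunc⟩
    refine ⟨interior_subset hwrng, fun a haK hap => ?_⟩
    have hlen : finLen r s a ∈ Iic (finLen r s q) := (hQsrc w hwN).2 ▸ hap.finLen_le
    exact mem_iInter₂.1 hwtrunc _ hlen (by rwa [hap.finTrunc_eq])
  refine mem_Vrg_of_subset_range hr (hQ.isOpen_inter_preimage hN hS) (fun w hw => ?_)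
    (isCompact_edgesAt hK (finLen r s q)) (fun e he => ?_) ⟨hqN, ?_⟩
  · obtain ⟨hrng, hfree⟩ := hfree w hw
    simpa only [(hQsrc w hw.1).1] using hex.finSrc_mem_range hrng hfree
  · obtain ⟨hrng, hfree⟩ := hfree (r e) he
    rw [← (hQsrc _ he.1).2]
    exact hex.inl_mem_image_edgeAt hrng hfree (hQsrc _ he.1).1
  · rw [mem_preimage, hQq]
    exact ⟨mem_interior_iff_mem_nhds.2 hW,
      mem_iInter₂.2 fun k _ hk => hnone _ hk (finTrunc_isPrefixOf k q)⟩

end Singular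

section Regular

variable [TopologicalSpace V] [TopologicalSpace E] [T2Space V]

lemma subset_image_preimage_closure (hr : Continuous r) {U : Set V} (hU : IsOpen U)
    (hUr : U ⊆ closure (range r)) (hC : IsCompact (r ⁻¹' closure U)) :
    U ⊆ r '' (r ⁻¹' closure U) := by
  have hdense : U ⊆ closure (U ∩ range r) := fun w hw => hU.inter_closure ⟨hw, hUr hw⟩
  refine hdense.trans (closure_minimal ?_ (hC.image hr).isClosed)
  rintro _ ⟨hwU, e, rfl⟩
  exact ⟨e, subset_closure hwU, rfl⟩

theorem exists_exhaustive_inl_notMem_of_mem_Vrg (hr : Continuous r) {v : V} (hv : v ∈ Vrg r) :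
    ∃ K : Set (FinPaths r s), IsCompact K ∧ finRng r s '' K ∈ 𝓝 v ∧
      Exhaustive r s K (finRng r s '' K) ∧ Sum.inl v ∉ K := by
  obtain ⟨⟨N, hN, hvN, hNc⟩, hvsce⟩ := hv
  rw [Vsce, closure_compl, notMem_compl_iff] at hvsce
  set U := N ∩ interior (closure (range r))
  have hU : IsOpen U := hN.inter isOpen_interior
  set C := r ⁻¹' closure U
  have hC : IsCompact C := hNc.of_isClosed_subset (isClosed_closure.preimage hr)
    (preimage_mono (closure_mono inter_subset_left))
  have hrng : finRng r s '' (edgePath r s '' C) = r '' C := by rw [image_image]; rfl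
  refine ⟨edgePath r s '' C, hC.image continuous_edgePath, ?_,
    ⟨subset_preimage_image _ _, ?_⟩, ?_⟩
  · rw [hrng]
    exact mem_of_superset (hU.mem_nhds ⟨hvN, hvsce⟩)
      (subset_image_preimage_closure hr hU (inter_subset_right.trans interior_subset) hC)
  · rintro (w | x) hx
    · obtain ⟨a, haK, rfl⟩ := hx
      exact ⟨a, haK, Or.inr rfl⟩
    · rw [hrng] at hx
      obtain ⟨e, he, hre : r e = r (x.2.1 0)⟩ := hx
      have hx0 : x.2.1 0 ∈ C := by rwa [mem_preimage, ← hre]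
      refine ⟨edgePath r s (x.2.1 0), ⟨_, hx0, rfl⟩,
        Or.inl ⟨Nat.zero_le _, fun j => ?_⟩⟩
      rw [Subsingleton.elim (α := Fin 1) j 0]
      rfl
  · rintro ⟨e, -, he⟩
    exact Sum.inr_ne_inl he

end Regular

theorem finite_boundary_iff_yeend_general
    [TopologicalSpace V] [TopologicalSpace E]
    [LocallyCompactSpace V] [T2Space V] [T2Space E]
    (r s : E → V) (hr : Continuous r) (hs : IsLocalHomeomorph s)
    (μ : FinPaths r s) :
    finSrc r s μ ∈ Vsg r ↔ YeendFin r s μ := by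
  refine ⟨fun hμ => ⟨fun x hx m hm K hK hKx hex => ?_, fun K hK hKμ hex => ?_⟩,
    fun hY hreg => ?_⟩
  · subst hx
    have hsrc : finSrc r s (finSeg r s x.2 m (x.1 - m) (by omega)) = finSrc r s (Sum.inr x) :=
      congrArg (fun i => s (x.2.1 i)) (Fin.ext (by simp only [Fin.val_last]; omega))
    obtain ⟨a, haK, ha⟩ :=
      exists_isPrefixOf_mem_of_finSrc_mem_Vsg (q := finSeg r s x.2 m (x.1 - m) (by omega))
        hr hs (hsrc ▸ hμ) hK hKx hex
    rcases isPrefixOf_finSeg ha with rfl | ⟨j, hj, rfl⟩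
    · exact Or.inl haK
    · exact Or.inr ⟨j, hj, haK⟩
  · obtain ⟨a, haK, ha⟩ :=
      exists_isPrefixOf_mem_of_finSrc_mem_Vsg (q := Sum.inl (finSrc r s μ)) hr hs hμ hK hKμ hex
    exact eq_of_isPrefixOf_inl ha ▸ haK
  · obtain ⟨K, hK, hKμ, hex, hμK⟩ := exists_exhaustive_inl_notMem_of_mem_Vrg (s := s) hr hreg
    exact hμK (hY.2 K hK hKμ hex)

/-- A finite path `μ ∈ E^*` satisfies `s(μ) ∈ E^0_sg` (i.e. `μ ∈ ∂E`)
if and only if `μ` is a Yeend boundary path. -/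
theorem finite_boundary_iff_yeend
    [TopologicalSpace V] [TopologicalSpace E]
    [LocallyCompactSpace V] [T2Space V] [LocallyCompactSpace E] [T2Space E]
    (r s : E → V) (hr : Continuous r) (hs : IsLocalHomeomorph s)
    (μ : FinPaths r s) :
    finSrc r s μ ∈ Vsg r ↔ YeendFin r s μ :=
  finite_boundary_iff_yeend_general r s hr hs μ

end TopGraphPaper
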